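/- If the greedily constructed branch β (going left at v whenever some good branch passes through the left child of v) turns left only finitely often, and t has a good branch, then one derives a contradiction: any good branch σ passing through the last left-turn point of β must diverge from β at some node w where β goes right but a good branch passes through the left child of w. -/

import Mathlib

open Classical

/-- Infinite binary trees over {a,b}; `true` = a, `false` = b. -/
abbrev Tree2 := List (Fin 2) → Bool

/-- The length-`n` prefix of a branch. -/
def pre (β : ℕ → Fin 2) (n : ℕ) : List (Fin 2) := List.ofFn (fun i : Fin n => β i)

/-- A branch is good: all its finite prefixes are labelled `a` and it turns left (0)
infinitely often. -/
def Good (t : Tree2) (β : ℕ → Fin 2) : Prop :=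
  (∀ n, t (pre β n) = true) ∧ (∀ m, ∃ n ≥ m, β n = 0)

/-- `β` is strictly to the left of `γ`. -/
def LeftOf (β γ : ℕ → Fin 2) : Prop :=
  ∃ n, (∀ i < n, β i = γ i) ∧ β n = 0 ∧ γ n = 1

/-- A branch passes through a node. -/
def Through (γ : ℕ → Fin 2) (v : List (Fin 2)) : Prop := pre γ v.length = v
/-- The greedy prefix: descend left iff some good branch passes through the left child. -/
noncomputable def greedyPre (t : Tree2) : ℕ → List (Fin 2)
  | 0 => []
  | n + 1 => greedyPre t n ++
      [if ∃ γ, Good t γ ∧ Through γ (greedyPre t n ++ [(0 : Fin 2)]) then (0 : Fin 2) else 1]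

/-- The greedily constructed branch. -/
noncomputable def greedy (t : Tree2) (n : ℕ) : Fin 2 :=
  if ∃ γ, Good t γ ∧ Through γ (greedyPre t n ++ [(0 : Fin 2)]) then 0 else 1

/-!
Starting from a good branch, induction shows that every greedy prefix `pre (greedy t) n` is
passed through by some good branch: if the greedy branch goes right at a node, no good branch
goes through the left child, so the good branch through the node goes right as well. A good
branch `σ` through `pre (greedy t) N` turns left somewhere after `N`, where the greedy branch
turns right; at the first such place `w`, `σ` itself passes through the left child of
`pre (greedy t) w`, so the greedy rule would have gone left at `w`.
-/

lemma pre_succ (β : ℕ → Fin 2) (n : ℕ) : pre β (n + 1) = pre β n ++ [β n] := by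
  rw [pre, List.ofFn_succ_last]
  simp [pre]

@[simp]
lemma length_pre (β : ℕ → Fin 2) (n : ℕ) : (pre β n).length = n := by simp [pre]

lemma pre_eq_pre_iff {β γ : ℕ → Fin 2} {n : ℕ} : pre β n = pre γ n ↔ ∀ i < n, β i = γ i := by
  simp [pre, List.ofFn_inj, funext_iff, Fin.forall_iff]

lemma through_pre_iff {γ δ : ℕ → Fin 2} {n : ℕ} :
    Through γ (pre δ n) ↔ ∀ i < n, γ i = δ i := by
  rw [Through, length_pre, pre_eq_pre_iff]

lemma through_pre_append_iff {γ δ : ℕ → Fin 2} {n : ℕ} {x : Fin 2} :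
    Through γ (pre δ n ++ [x]) ↔ (∀ i < n, γ i = δ i) ∧ γ n = x := by
  simp [Through, pre_succ, pre_eq_pre_iff]

lemma exists_first_left_turn_of_right_from {σ δ : ℕ → Fin 2} {N : ℕ}
    (hagree : ∀ i < N, σ i = δ i) (hright : ∀ n ≥ N, δ n = 1) (hleft : ∃ n ≥ N, σ n = 0) :
    ∃ w ≥ N, (∀ i < w, σ i = δ i) ∧ δ w = 1 ∧ σ w = 0 := by
  obtain ⟨hwN, hw⟩ := Nat.find_spec hleft
  refine ⟨Nat.find hleft, hwN, fun i hi ↦ ?_, hright _ hwN, hw⟩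
  by_cases hiN : i < N
  · exact hagree i hiN
  · have hσi : σ i ≠ 0 := fun h0 ↦ Nat.find_min hleft hi ⟨by omega, h0⟩
    rw [hright i (by omega)]
    omega

section Greedy

variable {t : Tree2}

lemma greedyPre_eq_pre (n : ℕ) : greedyPre t n = pre (greedy t) n := by
  induction n with
  | zero => rfl
  | succ n ih => rw [pre_succ, ← ih, greedyPre, greedy]

lemma greedy_eq_zero_iff {n : ℕ} :
    greedy t n = 0 ↔ ∃ γ, Good t γ ∧ Through γ (pre (greedy t) n ++ [0]) := by
  rw [greedy, greedyPre_eq_pre]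
  split_ifs with h <;> simp [h]

lemma exists_good_through_pre_greedy (h : ∃ γ, Good t γ) (n : ℕ) :
    ∃ γ, Good t γ ∧ Through γ (pre (greedy t) n) := by
  induction n with
  | zero =>
    obtain ⟨γ, hγ⟩ := h
    exact ⟨γ, hγ, through_pre_iff.mpr (by simp)⟩
  | succ n ih =>
    simp only [through_pre_iff, Nat.forall_lt_succ_right]
    by_cases hleft : greedy t n = 0
    · obtain ⟨δ, hδ, hδn⟩ := greedy_eq_zero_iff.mp hleft
      obtain ⟨hagree, hδ0⟩ := through_pre_append_iff.mp hδn
      exact ⟨δ, hδ, hagree, hδ0.trans hleft.symm⟩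
    · obtain ⟨γ, hγ, hagree⟩ := ih
      have hagree := through_pre_iff.mp hagree
      have hγn : γ n ≠ 0 := fun h0 ↦
        hleft (greedy_eq_zero_iff.mpr ⟨γ, hγ, through_pre_append_iff.mpr ⟨hagree, h0⟩⟩)
      exact ⟨γ, hγ, hagree, by omega⟩

lemma exists_good_through_left_of_right_from {N : ℕ} (hfin : ∀ n ≥ N, greedy t n = 1)
    {σ : ℕ → Fin 2} (hσ : Good t σ) (hthrough : Through σ (pre (greedy t) N)) :
    ∃ w, N ≤ w ∧ (∀ i < w, σ i = greedy t i) ∧ greedy t w = 1 ∧ σ w = 0 ∧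
      ∃ γ, Good t γ ∧ Through γ (pre (greedy t) w ++ [(0 : Fin 2)]) := by
  obtain ⟨w, hwN, hagree, hright, hleft⟩ :=
    exists_first_left_turn_of_right_from (through_pre_iff.mp hthrough) hfin (hσ.2 N)
  exact ⟨w, hwN, hagree, hright, hleft, σ, hσ, through_pre_append_iff.mpr ⟨hagree, hleft⟩⟩

end Greedy

/-- If the greedy branch turned left only finitely often while `t` has a good branch,
then any good branch passing through the point after the last left turn diverges from the
greedy branch at a node where the greedy branch goes right although a good branch passes
through the left child; this yields a contradiction. -/
theorem greedy_turns_left_infinitely (t : Tree2) (h : ∃ γ, Good t γ)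
    (N : ℕ) (hfin : ∀ n ≥ N, greedy t n = 1) :
    (∀ σ, Good t σ → Through σ (pre (greedy t) N) →
      ∃ w, N ≤ w ∧ (∀ i < w, σ i = greedy t i) ∧ greedy t w = 1 ∧ σ w = 0 ∧
        ∃ γ, Good t γ ∧ Through γ (pre (greedy t) w ++ [(0 : Fin 2)])) ∧
    False := by
  refine ⟨fun _ ↦ exists_good_through_left_of_right_from hfin, ?_⟩
  obtain ⟨σ, hσ, hthrough⟩ := exists_good_through_pre_greedy h N
  obtain ⟨w, -, -, hright, -, hgood⟩ := exists_good_through_left_of_right_from hfin hσ hthrough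
  exact absurd (greedy_eq_zero_iff.mpr hgood) (by rw [hright]; decide)
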